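/- Let k be a field of characteristic p > 0, let (R, 𝔪) be a commutative local k-algebra whose residue field is k, and let A = k[λ]/(λ^{p+1}). Let x, y, z ∈ 𝔪. Then for all elements m, n₂, n', l' ∈ R ⊗_k A and all l, n₁ ∈ 𝔪·(R ⊗_k A), one has (x ⊗ 1 + λm)(z ⊗ 1 + λl + λ^p l') ≠ (y ⊗ 1 + 1 ⊗ λ + λn₁ + λ²n₂ + λ^p n')^p in R ⊗_k A, where λ abbreviates 1 ⊗ λ. -/

import Mathlib

open Polynomial
open scoped TensorProduct

/-- The truncated polynomial algebra `k[λ]/(λ^n)`. -/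
abbrev TruncPoly (k : Type*) [CommRing k] (n : ℕ) : Type _ :=
  k[X] ⧸ Ideal.span {(X : k[X]) ^ n}

/-- The canonical nilpotent generator `λ` of `k[λ]/(λ^n)`. -/
noncomputable def truncGen (k : Type*) [CommRing k] (n : ℕ) : TruncPoly k n :=
  Ideal.Quotient.mk _ X

lemma truncGen_pow_eq_zero (k : Type*) [CommRing k] (n : ℕ) :
    truncGen k n ^ n = 0 := by
  rw [truncGen, ← map_pow, Ideal.Quotient.eq_zero_iff_mem]
  exact Ideal.mem_span_singleton_self _

lemma truncGen_pow_ne_zero (k : Type*) [Field k] (n j : ℕ) (h : j < n) :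
    truncGen k n ^ j ≠ 0 := by
  rw [truncGen, ← map_pow, Ne, Ideal.Quotient.eq_zero_iff_mem, Ideal.mem_span_singleton]
  intro hdvd
  have hxj : (X : k[X]) ^ j ≠ 0 := pow_ne_zero _ X_ne_zero
  have := Polynomial.natDegree_le_of_dvd hdvd hxj
  simp [Polynomial.natDegree_X_pow] at this
  omega

lemma key_pow_lemma {S : Type*} [CommRing S] (lam a b : S) (q : ℕ)
    (h0 : lam ^ (2 + q + 1) = 0) :
    (lam + lam ^ 2 * a + lam ^ (2 + q) * b) ^ (2 + q) = lam ^ (2 + q) := by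
  set c := lam * a + lam ^ (1 + q) * b with hc
  have h1 : lam + lam ^ 2 * a + lam ^ (2 + q) * b = lam * (1 + c) := by
    rw [hc]; ring
  rw [h1, mul_pow]
  obtain ⟨d, hd⟩ := sub_dvd_pow_sub_pow (1 + c) 1 (2 + q)
  have h2 : (1 + c) ^ (2 + q) = 1 + c * d := by
    have h3 : (1 + c) ^ (2 + q) - 1 ^ (2 + q) = (1 + c - 1) * d := hd
    simp only [one_pow] at h3
    linear_combination h3
  rw [h2, hc]
  linear_combination ((a + lam ^ q * b) * d) * h0

set_option maxHeartbeats 1000000 in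
/-- Let `k` be a field of characteristic `p > 0`, `(R,𝔪)` a commutative
local `k`-algebra with residue field `k`, `A = k[λ]/(λ^(p+1))`, and `x, y, z ∈ 𝔪`.  Then for
all `m, n₂, n', l' ∈ R ⊗_k A` and all `l, n₁ ∈ 𝔪·(R ⊗_k A)` one has
`(x ⊗ 1 + λm)(z ⊗ 1 + λl + λ^p l') ≠ (y ⊗ 1 + 1 ⊗ λ + λn₁ + λ²n₂ + λ^p n')^p`
in `R ⊗_k A`, where `λ` abbreviates `1 ⊗ λ`. -/
theorem surface_key_inequality
    (k : Type*) [Field k] (p : ℕ) (hp : p.Prime) [CharP k p]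
    (R : Type*) [CommRing R] [Algebra k R] [IsLocalRing R]
    (hres : Function.Bijective ((IsLocalRing.residue R).comp (algebraMap k R)))
    (x y z : R) (hx : x ∈ IsLocalRing.maximalIdeal R)
    (hy : y ∈ IsLocalRing.maximalIdeal R) (hz : z ∈ IsLocalRing.maximalIdeal R)
    (m n₂ n' l' : R ⊗[k] TruncPoly k (p + 1))
    (l n₁ : R ⊗[k] TruncPoly k (p + 1))
    (hl : l ∈ Ideal.span ((fun r : R => r ⊗ₜ[k] (1 : TruncPoly k (p + 1))) ''
      (IsLocalRing.maximalIdeal R : Set R)))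
    (hn₁ : n₁ ∈ Ideal.span ((fun r : R => r ⊗ₜ[k] (1 : TruncPoly k (p + 1))) ''
      (IsLocalRing.maximalIdeal R : Set R))) :
    (x ⊗ₜ[k] (1 : TruncPoly k (p + 1)) + ((1 : R) ⊗ₜ[k] truncGen k (p + 1)) * m) *
        (z ⊗ₜ[k] (1 : TruncPoly k (p + 1)) + ((1 : R) ⊗ₜ[k] truncGen k (p + 1)) * l +
          ((1 : R) ⊗ₜ[k] truncGen k (p + 1)) ^ p * l') ≠
      (y ⊗ₜ[k] (1 : TruncPoly k (p + 1)) + (1 : R) ⊗ₜ[k] truncGen k (p + 1) +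
          ((1 : R) ⊗ₜ[k] truncGen k (p + 1)) * n₁ +
          ((1 : R) ⊗ₜ[k] truncGen k (p + 1)) ^ 2 * n₂ +
          ((1 : R) ⊗ₜ[k] truncGen k (p + 1)) ^ p * n') ^ p := by
  intro heq
  -- the residue homomorphism `ψ : R → k`
  let e : k ≃+* R ⧸ IsLocalRing.maximalIdeal R := RingEquiv.ofBijective _ hres
  let ψ : R →ₐ[k] k :=
    { toRingHom := (e.symm : R ⧸ IsLocalRing.maximalIdeal R →+* k).comp (IsLocalRing.residue R)
      commutes' := fun c => by
        show e.symm (IsLocalRing.residue R (algebraMap k R c)) = algebraMap k k c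
        have h : IsLocalRing.residue R (algebraMap k R c) = e c := rfl
        rw [h, RingEquiv.symm_apply_apply]
        simp }
  have hψ0 : ∀ r ∈ IsLocalRing.maximalIdeal R, ψ r = 0 := by
    intro r hr
    show e.symm (IsLocalRing.residue R r) = 0
    rw [show IsLocalRing.residue R r = 0 from Ideal.Quotient.eq_zero_iff_mem.mpr hr]
    exact map_zero e.symm
  -- the projection `φ : R ⊗ A → A`
  let φ : R ⊗[k] TruncPoly k (p + 1) →ₐ[k] TruncPoly k (p + 1) :=
    Algebra.TensorProduct.productMap ((Algebra.ofId k _).comp ψ) (AlgHom.id k _)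
  have hφt : ∀ (r : R) (t : TruncPoly k (p + 1)),
      φ (r ⊗ₜ t) = algebraMap k _ (ψ r) * t := by
    intro r t
    simp [φ, Algebra.TensorProduct.productMap_apply_tmul, Algebra.ofId_apply]
  have hφm : ∀ r ∈ IsLocalRing.maximalIdeal R, φ (r ⊗ₜ (1 : TruncPoly k (p + 1))) = 0 := by
    intro r hr
    rw [hφt, hψ0 r hr, map_zero, zero_mul]
  -- elements of `𝔪·(R ⊗ A)` map to zero
  have hspan : ∀ v ∈ Ideal.span ((fun r : R => r ⊗ₜ[k] (1 : TruncPoly k (p + 1))) ''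
      (IsLocalRing.maximalIdeal R : Set R)), φ v = 0 := by
    intro v hv
    have h1 : φ v ∈ Ideal.map φ.toRingHom
        (Ideal.span ((fun r : R => r ⊗ₜ[k] (1 : TruncPoly k (p + 1))) ''
          (IsLocalRing.maximalIdeal R : Set R))) := Ideal.mem_map_of_mem _ hv
    rw [Ideal.map_span] at h1
    have h2 : Ideal.span (φ.toRingHom ''
        ((fun r : R => r ⊗ₜ[k] (1 : TruncPoly k (p + 1))) ''
          (IsLocalRing.maximalIdeal R : Set R))) = ⊥ := by
      rw [Ideal.span_eq_bot]
      rintro _ ⟨_, ⟨r, hr, rfl⟩, rfl⟩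
      exact hφm r hr
    rw [h2] at h1
    exact Ideal.mem_bot.mp h1
  -- apply `φ` to the equation
  set lam : TruncPoly k (p + 1) := truncGen k (p + 1) with hlam
  have hφlam : φ ((1 : R) ⊗ₜ[k] lam) = lam := by
    rw [hφt, map_one, map_one, one_mul]
  have h0 : lam ^ (p + 1) = 0 := truncGen_pow_eq_zero k (p + 1)
  have heq' := congrArg φ heq
  have hφpow : ∀ (a : R ⊗[k] TruncPoly k (p + 1)) (n : ℕ), φ (a ^ n) = φ a ^ n :=
    fun a n => map_pow φ.toRingHom a n
  rw [map_mul, hφpow] at heq'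
  simp only [map_add, map_mul, hφpow, hφlam, hφm x hx, hφm y hy, hφm z hz,
    hspan l hl, hspan n₁ hn₁, mul_zero, zero_add, add_zero] at heq'
  -- heq' : lam * φ m * (lam ^ p * φ l') = (lam + lam ^ 2 * φ n₂ + lam ^ p * φ n') ^ p
  obtain ⟨q, hq⟩ : ∃ q, p = 2 + q := ⟨p - 2, by have := hp.two_le; omega⟩
  subst hq
  have hrhs : (lam + lam ^ 2 * φ n₂ + lam ^ (2 + q) * φ n') ^ (2 + q) = lam ^ (2 + q) :=
    key_pow_lemma lam (φ n₂) (φ n') q h0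
  have hlhs : lam * φ m * (lam ^ (2 + q) * φ l') = 0 := by
    have h4 : lam * φ m * (lam ^ (2 + q) * φ l') = lam ^ (2 + q + 1) * (φ m * φ l') := by ring
    rw [h4, h0, zero_mul]
  rw [hrhs, hlhs] at heq'
  exact truncGen_pow_ne_zero k (2 + q + 1) (2 + q) (by omega) heq'.symm
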